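/- arXiv:1402.4763 — 8 statements merged into one kernel-verified Lean document; each statement's English description precedes it below -/
import Mathlib

section
/- For every natural number N ≥ 1 and every invertible real N×N matrix B, there exist a real orthogonal N×N matrix M and a real number μ₀ with 0 < μ₀ < 1 such that for every μ with 0 < μ < μ₀, every complex eigenvalue of the matrix I + μ·M·B has modulus strictly less than 1 (equivalently, the spectral radius of I + μ·M·B is less than 1). (This is the linear-algebra core of the Schmelcher–Diakonos result underlying Predictive Feedback Control: it can be proved by taking the polar decomposition B = OP with O orthogonal and P symmetric positive definite, and choosing M = −Oᵀ, so that MB = −P has strictly negative real spectrum.) -/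
/-!
Polar decomposition: with `P = √(BᵀB)` positive definite, `M = -P B⁻¹` is orthogonal and
`M B = -P`. Then `I + μ M B = I - μ P` is symmetric, so its complex eigenvalues are the real
numbers `1 - μ s` with `s` in the (positive, finite) spectrum of `P`, and these lie in `(-1, 1)`
as soon as `μ s < 2`.
-/

open Matrix
open scoped MatrixOrder

section
variable {A : Type*} [Ring A] [Algebra ℝ A]

theorem spectrum_one_sub_smul_subset_Ioo {a : A} {μ : ℝ} (hμ : 0 < μ)
    (ha : spectrum ℝ a ⊆ Set.Ioo 0 (2 / μ)) : spectrum ℝ (1 - μ • a) ⊆ Set.Ioo (-1) 1 := by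
  intro t ht
  rw [← Units.val_mk0 hμ.ne', ← Units.smul_def, ← map_one (algebraMap ℝ A),
    ← spectrum.singleton_sub_eq, spectrum.unit_smul_eq_smul] at ht
  obtain ⟨_, rfl, _, ⟨s, hs, rfl⟩, rfl⟩ := ht
  obtain ⟨hs0, hs2⟩ := ha hs
  rw [lt_div_iff₀ hμ] at hs2
  simp only [Units.val_mk0, smul_eq_mul]
  constructor <;> nlinarith
end

variable {n : Type*} [Fintype n] [DecidableEq n]

theorem Matrix.spectrum_real_map_ofReal (A : Matrix n n ℝ) :
    spectrum ℝ (A.map Complex.ofReal) = spectrum ℝ A := by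
  ext s
  simp only [spectrum.mem_iff, not_iff_not, isUnit_iff_isUnit_det]
  have hmap : algebraMap ℝ (Matrix n n ℂ) s - A.map Complex.ofReal
      = Complex.ofRealHom.mapMatrix (algebraMap ℝ (Matrix n n ℝ) s - A) := by
    ext i j
    simp [algebraMap_matrix_apply, apply_ite]
  rw [hmap, ← RingHom.map_det, isUnit_map_iff]

theorem Matrix.IsHermitian.spectrum_map_ofReal {A : Matrix n n ℝ} (hA : A.IsHermitian) :
    spectrum ℂ (A.map Complex.ofReal) = Complex.ofReal '' spectrum ℝ A := by
  have hAc : (A.map Complex.ofReal).IsHermitian := hA.map _ fun x => (Complex.conj_ofReal x).symm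
  rw [hAc.spectrum_eq_image_range, ← hAc.spectrum_real_eq_range_eigenvalues,
    spectrum_real_map_ofReal]
  rfl

theorem Matrix.transpose_mul_self_of_mul_self_eq {B P : Matrix n n ℝ} (hB : IsUnit B)
    (hP : Pᵀ = P) (hPP : P * P = Bᵀ * B) : (P * B⁻¹)ᵀ * (P * B⁻¹) = 1 := by
  have hBB : B * B⁻¹ = 1 := mul_nonsing_inv B ((isUnit_iff_isUnit_det B).mp hB)
  calc (P * B⁻¹)ᵀ * (P * B⁻¹) = (B⁻¹)ᵀ * (P * P) * B⁻¹ := by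
        simp only [transpose_mul, hP, Matrix.mul_assoc]
    _ = (B * B⁻¹)ᵀ * (B * B⁻¹) := by simp only [hPP, transpose_mul, Matrix.mul_assoc]
    _ = 1 := by simp [hBB]

theorem Matrix.exists_orthogonal_mul_eq_neg_posDef {B : Matrix n n ℝ} (hB : IsUnit B) :
    ∃ M P : Matrix n n ℝ, Mᵀ * M = 1 ∧ P.PosDef ∧ M * B = -P := by
  have hBB : (Bᵀ * B).PosDef := by
    simpa using PosDef.conjTranspose_mul_self B (mulVec_injective_iff_isUnit.mpr hB)
  set P := CFC.sqrt (Bᵀ * B)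
  have hP : P.PosDef := (hBB.isStrictlyPositive.sqrt).posDef
  refine ⟨-(P * B⁻¹), P, ?_, hP, ?_⟩
  · rw [transpose_neg, neg_mul_neg]
    exact transpose_mul_self_of_mul_self_eq hB hP.isHermitian.eq
      (CFC.sqrt_mul_sqrt_self _ hBB.posSemidef.nonneg)
  · rw [neg_mul, Matrix.mul_assoc, nonsing_inv_mul B ((isUnit_iff_isUnit_det B).mp hB), mul_one]

theorem stmt0_general (N : ℕ) (B : Matrix (Fin N) (Fin N) ℝ) (hB : IsUnit B) :
    ∃ (M : Matrix (Fin N) (Fin N) ℝ) (μ₀ : ℝ),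
      M.transpose * M = 1 ∧ 0 < μ₀ ∧ μ₀ < 1 ∧
      ∀ μ : ℝ, 0 < μ → μ < μ₀ →
        ∀ z ∈ spectrum ℂ ((1 + μ • (M * B)).map Complex.ofReal), ‖z‖ < 1 := by
  obtain ⟨M, P, hM, hP, hMB⟩ := exists_orthogonal_mul_eq_neg_posDef hB
  obtain ⟨T, hT⟩ := P.finite_real_spectrum.bddAbove
  have hT2 : 1 < |T| + 2 := by linarith [abs_nonneg T]
  refine ⟨M, (|T| + 2)⁻¹, hM, by positivity, inv_lt_one_of_one_lt₀ hT2, ?_⟩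
  intro μ hμ hμ₀ z hz
  have hμT : μ * (|T| + 2) < 1 := by rwa [← lt_inv_mul_iff₀' (by positivity), mul_one]
  have hσ : spectrum ℝ P ⊆ Set.Ioo 0 (2 / μ) := fun s hs => by
    refine ⟨hP.isStrictlyPositive.spectrum_pos hs, (lt_div_iff₀ hμ).2 ?_⟩
    nlinarith [hT hs, le_abs_self T]
  have hsymm : (1 - μ • P).IsHermitian :=
    isHermitian_one.sub (hP.isHermitian.smul (star_trivial μ))
  rw [hMB, smul_neg, ← sub_eq_add_neg, hsymm.spectrum_map_ofReal] at hz
  obtain ⟨t, ht, rfl⟩ := hz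
  simpa [abs_lt] using spectrum_one_sub_smul_subset_Ioo hμ hσ ht

/-- Schmelcher–Diakonos: for every invertible real `N × N` matrix `B` there exist an
orthogonal matrix `M` and `μ₀ ∈ (0,1)` such that for all `0 < μ < μ₀` every complex
eigenvalue of `I + μ • (M * B)` has modulus strictly less than one. -/
theorem stmt0 (N : ℕ) (hN : 1 ≤ N) (B : Matrix (Fin N) (Fin N) ℝ) (hB : IsUnit B) :
    ∃ (M : Matrix (Fin N) (Fin N) ℝ) (μ₀ : ℝ),
      M.transpose * M = 1 ∧ 0 < μ₀ ∧ μ₀ < 1 ∧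
      ∀ μ : ℝ, 0 < μ → μ < μ₀ →
        ∀ z ∈ spectrum ℂ ((1 + μ • (M * B)).map Complex.ofReal), ‖z‖ < 1 :=
  stmt0_general N B hB
end

section
/- Let λ₁, λ₂ be real numbers with −1 < λ₁ < 1 and λ₂ < −1 (a periodic orbit of saddle type with a flip-unstable direction). Then there exists μ ∈ (0, 1) such that |1 + μ·(λ₁ − 1)| < 1 and |1 + μ·(λ₂ − 1)| < 1. That is, such saddle orbits are PFC-stabilizable: both eigenvalues κⱼ(μ) = 1 + μ(λⱼ − 1) of the Predictive Feedback Control linearization lie strictly inside the unit interval for a suitable control parameter μ ∈ (0,1). -/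
/-! Taking `μ = 1 / (1 - λ₂)` places the flip-unstable multiplier exactly at `κ₂ = 0`; since
`λ₂ < -1`, this `μ` lies in `(0, 1)`. For `μ ∈ (0, 1]` the controlled multiplier
`κ(μ) = (1 - μ) · 1 + μ · λ` is a convex combination of `1` and `λ`, so the stable multiplier
`λ₁ ∈ (-1, 1)` stays inside `(-1, 1)`. -/

theorem abs_one_add_mul_sub_one_lt_one {μ l : ℝ} (hμ : 0 < μ) (hμ1 : μ ≤ 1) (hl : |l| < 1) :
    |1 + μ * (l - 1)| < 1 :=
  calc |1 + μ * (l - 1)| = |(1 - μ) + μ * l| := by ring_nf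
    _ ≤ |1 - μ| + |μ * l| := abs_add_le _ _
    _ = (1 - μ) + μ * |l| := by rw [abs_mul, abs_of_nonneg (sub_nonneg.2 hμ1), abs_of_pos hμ]
    _ < 1 := by nlinarith

theorem one_add_inv_one_sub_mul_sub_one {l : ℝ} (hl : l ≠ 1) : 1 + (1 - l)⁻¹ * (l - 1) = 0 := by
  field_simp [sub_ne_zero.2 hl.symm]
  ring

/-- Saddle periodic orbits with `λ₁ ∈ (-1,1)` and `λ₂ < -1` are PFC-stabilizable:
there is a control parameter `μ ∈ (0,1)` with `|1 + μ(λⱼ - 1)| < 1` for `j = 1, 2`. -/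
theorem stmt7 (lam1 lam2 : ℝ) (h1 : -1 < lam1) (h1' : lam1 < 1) (h2 : lam2 < -1) :
    ∃ μ : ℝ, 0 < μ ∧ μ < 1 ∧
      |1 + μ * (lam1 - 1)| < 1 ∧ |1 + μ * (lam2 - 1)| < 1 := by
  have hμ : 0 < (1 - lam2)⁻¹ := inv_pos.2 (by linarith)
  have hμ1 : (1 - lam2)⁻¹ < 1 := inv_lt_one_of_one_lt₀ (by linarith)
  refine ⟨(1 - lam2)⁻¹, hμ, hμ1, ?_, ?_⟩
  · exact abs_one_add_mul_sub_one_lt_one hμ hμ1.le (abs_lt.2 ⟨h1, h1'⟩)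
  · rw [one_add_inv_one_sub_mul_sub_one (by linarith)]
    norm_num
end

section
/- Let k ≥ 1 and let λ₁, …, λ_k ∈ ℂ satisfy Re λⱼ < 1 for all j = 1, …, k. Then there exists μ ∈ (0, 1) such that |1 + μ·(λⱼ − 1)| < 1 for all j. (Eigenvalue tuples whose entries all lie in the region R₂ ∪ R₃ = {z ∈ ℂ : Re z < 1} are simultaneously stabilizable by Predictive Feedback Control with a positive control parameter.) -/
/-!
Since `‖1 + μ z‖² = 1 + 2 μ Re z + μ² ‖z‖²`, a point `z` with `Re z < 0` satisfies
`‖1 + μ z‖ < 1` for all sufficiently small `μ > 0`. Applied to `z = λⱼ - 1`, finitely many such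
conditions hold simultaneously near `0⁺`.
-/

open Filter Topology Set

namespace Complex

theorem norm_one_add_mul_lt_one {z : ℂ} {μ : ℝ} (hμ : 0 < μ) (h : μ * ‖z‖ ^ 2 < -2 * z.re) :
    ‖1 + μ * z‖ < 1 := by
  have hsq : ‖1 + μ * z‖ ^ 2 = 1 + μ * (2 * z.re + μ * ‖z‖ ^ 2) := by
    rw [Complex.sq_norm, Complex.sq_norm, normSq_apply, normSq_apply]
    simp only [add_re, add_im, one_re, one_im, re_ofReal_mul, im_ofReal_mul]
    ring
  have hlt : ‖1 + μ * z‖ ^ 2 < 1 ^ 2 := by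
    rw [hsq, one_pow]
    nlinarith
  exact lt_of_pow_lt_pow_left₀ 2 zero_le_one hlt

theorem eventually_norm_one_add_mul_lt_one {z : ℂ} (hz : z.re < 0) :
    ∀ᶠ μ : ℝ in 𝓝[>] 0, ‖1 + μ * z‖ < 1 := by
  have hz0 : z ≠ 0 := fun h => by simp [h] at hz
  have hbound : 0 < -2 * z.re / ‖z‖ ^ 2 := by
    apply div_pos <;> [linarith; positivity]
  filter_upwards [Ioo_mem_nhdsGT hbound] with μ ⟨hμ, hμz⟩
  exact norm_one_add_mul_lt_one hμ ((lt_div_iff₀ (by positivity)).1 hμz)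

end Complex

theorem stmt9_general (k : ℕ) (lam : Fin k → ℂ) (h : ∀ j, (lam j).re < 1) :
    ∃ μ : ℝ, 0 < μ ∧ μ < 1 ∧
      ∀ j, ‖1 + (μ : ℂ) * (lam j - 1)‖ < 1 := by
  have hstable : ∀ᶠ μ : ℝ in 𝓝[>] 0, ∀ j, ‖1 + (μ : ℂ) * (lam j - 1)‖ < 1 :=
    eventually_all.2 fun j =>
      Complex.eventually_norm_one_add_mul_lt_one (by simpa using h j)
  have hsmall : ∀ᶠ μ : ℝ in 𝓝[>] 0, μ ∈ Ioo 0 1 := Ioo_mem_nhdsGT one_pos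
  obtain ⟨μ, ⟨hμ₀, hμ₁⟩, hμ⟩ := (hsmall.and hstable).exists
  exact ⟨μ, hμ₀, hμ₁, hμ⟩

/-- Eigenvalue tuples lying in `R₂ ∪ R₃ = {z : Re z < 1}` are simultaneously
stabilizable by Predictive Feedback Control with a positive control parameter
`μ ∈ (0, 1)`. -/
theorem stmt9 (k : ℕ) (hk : 1 ≤ k) (lam : Fin k → ℂ) (h : ∀ j, (lam j).re < 1) :
    ∃ μ : ℝ, 0 < μ ∧ μ < 1 ∧
      ∀ j, ‖1 + (μ : ℂ) * (lam j - 1)‖ < 1 :=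
  stmt9_general k lam h
end

section
/- Let k ≥ 1 and let w₁, …, w_k ∈ ℂ be nonzero. Suppose there is a vector v = (v₁, v₂) ∈ ℝ² such that v₁ · ln|wⱼ| + v₂ · (Re wⱼ − 1) < 0 for every j = 1, …, k (i.e., v lies in the common domain of stability of the tuple). Then there exists t₀ > 0 such that for all t ∈ (0, t₀) and all j, L_{wⱼ}(t·v₁, t·v₂) < 1. In particular there exist parameters (α₀, μ₀) with L_{wⱼ}(α₀, μ₀) < 1 for all j simultaneously, and if v₁ ≥ 0 then (α₀, μ₀) can be chosen with α₀ ≥ 0. -/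
/-!
Along the ray `t ↦ t • v` one has, as long as both moduli are nonzero,
`log L_w(t v₁, t v₂) = t v₁ log |w| + (1 - t v₁) log |1 + t v₂ (w - 1)|`. This vanishes at
`t = 0` with derivative `v₁ log |w| + v₂ (Re w - 1) < 0`, so it is negative for all small
`t > 0`; finitely many such eventual conditions hold on a common interval `(0, t₀)`.
-/

open Filter Topology

/-- The rescaled stability function of Stalled Predictive Feedback Control:
`L_w(α, μ) = |w|^α * |1 + μ(w - 1)|^(1-α)` (real powers). -/
noncomputable def stabilityFunction (w : ℂ) (α μ : ℝ) : ℝ :=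
  ‖w‖ ^ α * ‖1 + (μ : ℂ) * (w - 1)‖ ^ (1 - α)

lemma HasDerivAt.eventually_lt_right {f : ℝ → ℝ} {f' x : ℝ} (hf : HasDerivAt f f' x)
    (hf' : f' < 0) : ∀ᶠ z in 𝓝[>] x, f z < f x := by
  filter_upwards [hf.hasDerivWithinAt.limsup_slope_le' (lt_irrefl x) hf', self_mem_nhdsWithin]
    with z hslope (hxz : x < z)
  rw [slope_def_field, div_neg_iff] at hslope
  rcases hslope with ⟨-, hneg⟩ | ⟨hdrop, -⟩ <;> linarith

lemma hasDerivAt_log_norm_one_add_mul (c : ℂ) :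
    HasDerivAt (fun μ : ℝ => Real.log ‖1 + (μ : ℂ) * c‖) c.re 0 := by
  have h : HasDerivAt (fun z : ℂ => Complex.log (1 + z * c)) c 0 := by
    simpa using (((hasDerivAt_id (0 : ℂ)).mul_const c).const_add 1).clog (by simp)
  simpa only [Complex.log_re] using h.real_of_complex

lemma stabilityFunction_eq_exp {w : ℂ} {α μ : ℝ} (hw : w ≠ 0)
    (hμ : 1 + (μ : ℂ) * (w - 1) ≠ 0) :
    stabilityFunction w α μ =
      Real.exp (α * Real.log ‖w‖ + (1 - α) * Real.log ‖1 + (μ : ℂ) * (w - 1)‖) := by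
  rw [stabilityFunction, Real.rpow_def_of_pos (norm_pos_iff.2 hw),
    Real.rpow_def_of_pos (norm_pos_iff.2 hμ), ← Real.exp_add]
  ring_nf

lemma eventually_stabilityFunction_lt_one {w : ℂ} (hw : w ≠ 0) {v1 v2 : ℝ}
    (hv : v1 * Real.log ‖w‖ + v2 * (w.re - 1) < 0) :
    ∀ᶠ t in 𝓝[>] 0, stabilityFunction w (t * v1) (t * v2) < 1 := by
  set E : ℝ → ℝ := fun t =>
    t * v1 * Real.log ‖w‖ + (1 - t * v1) * Real.log ‖1 + ((t * v2 : ℝ) : ℂ) * (w - 1)‖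
  have hE : HasDerivAt E (v1 * Real.log ‖w‖ + v2 * (w.re - 1)) 0 := by
    have hμ : HasDerivAt (fun t : ℝ => Real.log ‖1 + ((t * v2 : ℝ) : ℂ) * (w - 1)‖)
        ((w - 1).re * v2) 0 :=
      (hasDerivAt_log_norm_one_add_mul (w - 1)).comp_of_eq 0 (hasDerivAt_mul_const v2)
        (zero_mul v2).symm
    have hα : HasDerivAt (fun t : ℝ => t * v1) v1 0 := hasDerivAt_mul_const v1
    refine ((hα.mul_const (Real.log ‖w‖)).add ((hα.const_sub 1).mul hμ)).congr_deriv ?_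
    simp only [zero_mul, Complex.ofReal_zero, add_zero, norm_one, Real.log_one, mul_zero,
      sub_zero, one_mul, Complex.sub_re, Complex.one_re]
    ring
  have hcont : Continuous fun t : ℝ => 1 + ((t * v2 : ℝ) : ℂ) * (w - 1) := by fun_prop
  have hnonzero : ∀ᶠ t in 𝓝 (0 : ℝ), 1 + ((t * v2 : ℝ) : ℂ) * (w - 1) ≠ 0 :=
    hcont.continuousAt.eventually_ne (by simp)
  filter_upwards [hE.eventually_lt_right hv, nhdsWithin_le_nhds hnonzero] with t hEt ht
  rw [stabilityFunction_eq_exp hw ht, Real.exp_lt_one_iff]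
  simpa [E] using hEt

theorem stmt12_general (k : ℕ) (w : Fin k → ℂ) (hw : ∀ j, w j ≠ 0)
    (v1 v2 : ℝ)
    (hv : ∀ j, v1 * Real.log ‖w j‖ + v2 * ((w j).re - 1) < 0) :
    (∃ t₀ : ℝ, 0 < t₀ ∧ ∀ t : ℝ, 0 < t → t < t₀ →
      ∀ j, stabilityFunction (w j) (t * v1) (t * v2) < 1) ∧
    (∃ α₀ μ₀ : ℝ, (0 ≤ v1 → 0 ≤ α₀) ∧ ∀ j, stabilityFunction (w j) α₀ μ₀ < 1) := by
  have hall : ∀ᶠ t in 𝓝[>] 0, ∀ j, stabilityFunction (w j) (t * v1) (t * v2) < 1 :=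
    eventually_all.2 fun j => eventually_stabilityFunction_lt_one (hw j) (hv j)
  obtain ⟨t₀, ht₀ : 0 < t₀, hsub⟩ := mem_nhdsGT_iff_exists_Ioo_subset.1 hall
  have hray : ∀ t : ℝ, 0 < t → t < t₀ → ∀ j, stabilityFunction (w j) (t * v1) (t * v2) < 1 :=
    fun t ht htt₀ => hsub ⟨ht, htt₀⟩
  refine ⟨⟨t₀, ht₀, hray⟩, t₀ / 2 * v1, t₀ / 2 * v2,
    fun hv1 => mul_nonneg (by positivity) hv1, ?_⟩
  exact hray (t₀ / 2) (by positivity) (by linarith)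

/-- A common strict descent direction `v = (v₁, v₂)` at the origin (i.e.
`v₁ ln|wⱼ| + v₂ (Re wⱼ - 1) < 0` for all `j`) yields parameters along the ray `t • v`,
for all sufficiently small `t > 0`, at which all stability functions are `< 1`
simultaneously; in particular such parameters `(α₀, μ₀)` exist, with `α₀ ≥ 0`
whenever `v₁ ≥ 0`. -/
theorem stmt12 (k : ℕ) (hk : 1 ≤ k) (w : Fin k → ℂ) (hw : ∀ j, w j ≠ 0)
    (v1 v2 : ℝ)
    (hv : ∀ j, v1 * Real.log ‖w j‖ + v2 * ((w j).re - 1) < 0) :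
    (∃ t₀ : ℝ, 0 < t₀ ∧ ∀ t : ℝ, 0 < t → t < t₀ →
      ∀ j, stabilityFunction (w j) (t * v1) (t * v2) < 1) ∧
    (∃ α₀ μ₀ : ℝ, (0 ≤ v1 → 0 ≤ α₀) ∧ ∀ j, stabilityFunction (w j) α₀ μ₀ < 1) :=
  stmt12_general k w hw v1 v2 hv
end

section
/- Let w₁, w₂ ∈ ℂ be nonzero and assume the two vectors u₁ = (ln|w₁|, Re w₁ − 1) and u₂ = (ln|w₂|, Re w₂ − 1) in ℝ² are linearly independent. Then there exists (α, μ) ∈ ℝ² such that L_{w₁}(α, μ) < 1 and L_{w₂}(α, μ) < 1. That is, for a two-dimensional system, linear independence of the gradients of the stability functions at the origin guarantees that the pair of eigenvalues is stabilizable by Stalled Predictive Feedback Control. -/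
/-!
Along the ray `t ↦ (t a, t m)` the stability function `L_w` equals `1` at `t = 0` and has
derivative `a ln|w| + m (Re w - 1)` there, so it drops below `1` for small `t > 0` as soon as
this derivative is negative. Linear independence of the two gradients yields a linear functional
equal to `-1` on both, i.e. a direction `(a, m)` that is a strict descent direction for both
`L_{w₁}` and `L_{w₂}`.
-/

open Filter Topology
open scoped RealInnerProductSpace

theorem LinearIndependent.exists_dual_apply_eq_neg_one {K V ι : Type*} [Field K]
    [AddCommGroup V] [Module K V] {v : ι → V} (hv : LinearIndependent K v) :
    ∃ f : Module.Dual K V, ∀ i, f (v i) = -1 := by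
  have hrange := (linearIndepOn_id_range_iff hv.injective).mpr hv
  let b := Module.Basis.extend hrange
  refine ⟨-b.sumCoords, fun i => ?_⟩
  have hsum := b.sumCoords_self_apply (i := ⟨v i, hrange.subset_extend _ ⟨i, rfl⟩⟩)
  rw [Module.Basis.extend_apply_self] at hsum
  rw [LinearMap.neg_apply, hsum]

theorem LinearMap.apply_mk_eq_mul_add_mul {R : Type*} [CommSemiring R] (f : R × R →ₗ[R] R)
    (x y : R) : f (x, y) = x * f (1, 0) + y * f (0, 1) := by
  have hxy : (x, y) = x • ((1 : R), (0 : R)) + y • ((0 : R), (1 : R)) := by simp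
  rw [hxy, map_add, map_smul, map_smul, smul_eq_mul, smul_eq_mul]

theorem HasDerivAt.norm {F : Type*} [NormedAddCommGroup F] [InnerProductSpace ℝ F]
    {f : ℝ → F} {f' : F} {x : ℝ} (hf : HasDerivAt f f' x) (hx : f x ≠ 0) :
    HasDerivAt (fun t => ‖f t‖) (⟪f x, f'⟫ / ‖f x‖) x := by
  have hsqrt := hf.norm_sq.sqrt (by simpa using hx)
  simp only [Real.sqrt_sq (norm_nonneg _)] at hsqrt
  convert hsqrt using 1
  field_simp

theorem HasDerivAt.eventually_lt_of_deriv_neg {f : ℝ → ℝ} {f' x : ℝ} (hf : HasDerivAt f f' x)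
    (hf' : f' < 0) : ∀ᶠ t in 𝓝[>] x, f t < f x := by
  filter_upwards [hf.hasDerivWithinAt.limsup_slope_le' (lt_irrefl x) hf', self_mem_nhdsWithin]
    with t hslope ht
  exact (slope_neg_iff_of_le (le_of_lt ht)).mp hslope

theorem stabilityFunction_zero_zero (w : ℂ) : stabilityFunction w 0 0 = 1 := by
  simp [stabilityFunction]

theorem hasDerivAt_norm_one_add_mul_sub_one (w : ℂ) (m : ℝ) :
    HasDerivAt (fun t : ℝ => ‖1 + ((t * m : ℝ) : ℂ) * (w - 1)‖) (m * (w.re - 1)) 0 := by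
  have hpath := (((hasDerivAt_mul_const (x := 0) m).ofReal_comp).mul_const (w - 1)).const_add 1
  convert hpath.norm (by simp) using 1
  simp [Complex.inner]

theorem hasDerivAt_stabilityFunction_smul {w : ℂ} (hw : w ≠ 0) (a m : ℝ) :
    HasDerivAt (fun t => stabilityFunction w (t * a) (t * m))
      (Real.log ‖w‖ * a + (w.re - 1) * m) 0 := by
  have hpow := (hasDerivAt_mul_const (x := 0) a).const_rpow (norm_pos_iff.mpr hw)
  have hnorm := (hasDerivAt_norm_one_add_mul_sub_one w m).rpow
    ((hasDerivAt_mul_const (x := 0) a).const_sub 1) (by simp)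
  exact (hpow.mul hnorm).congr_deriv (by simp [mul_comm])

theorem stabilityFunction_smul_eventually_lt_one {w : ℂ} (hw : w ≠ 0) {a m : ℝ}
    (hdescent : Real.log ‖w‖ * a + (w.re - 1) * m < 0) :
    ∀ᶠ t in 𝓝[>] (0 : ℝ), stabilityFunction w (t * a) (t * m) < 1 := by
  simpa [stabilityFunction_zero_zero] using
    (hasDerivAt_stabilityFunction_smul hw a m).eventually_lt_of_deriv_neg hdescent

/-- If the gradients `(ln|w₁|, Re w₁ - 1)` and `(ln|w₂|, Re w₂ - 1)` of the stability
functions at the origin are linearly independent, then the pair of eigenvalues is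
SPFC-stabilizable: there are parameters `(α, μ)` with `L_{w₁}(α,μ) < 1` and
`L_{w₂}(α,μ) < 1`. -/
theorem stmt13 (w₁ w₂ : ℂ) (hw₁ : w₁ ≠ 0) (hw₂ : w₂ ≠ 0)
    (hli : LinearIndependent ℝ
      ![(Real.log ‖w₁‖, w₁.re - 1), (Real.log ‖w₂‖, w₂.re - 1)]) :
    ∃ α μ : ℝ, stabilityFunction w₁ α μ < 1 ∧ stabilityFunction w₂ α μ < 1 := by
  obtain ⟨f, hf⟩ := hli.exists_dual_apply_eq_neg_one
  have hdescent : ∀ {w : ℂ}, f (Real.log ‖w‖, w.re - 1) = -1 →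
      Real.log ‖w‖ * f (1, 0) + (w.re - 1) * f (0, 1) < 0 := fun hfw => by
    rw [← LinearMap.apply_mk_eq_mul_add_mul, hfw]
    norm_num
  obtain ⟨t, h₁, h₂⟩ := ((stabilityFunction_smul_eventually_lt_one hw₁ (hdescent (hf 0))).and
    (stabilityFunction_smul_eventually_lt_one hw₂ (hdescent (hf 1)))).exists
  exact ⟨_, _, h₁, h₂⟩
end

section
/- Let λ₁, λ₂ be real numbers with −1 < λ₁ < 1 and λ₂ < −1, and set μ* = 1/(1 − λ₂). Then μ* ∈ (0, 1/2), the controlled eigenvalues satisfy 1 + μ*(λ₂ − 1) = 0 and 1 + μ*(λ₁ − 1) = (λ₁ − λ₂)/(1 − λ₂) ∈ (0, 1), and consequently for every m ≥ 1 and every n ≥ 0 the Stalled Predictive Feedback Control eigenvalues obey |λ₁|ⁿ · |1 + μ*(λ₁ − 1)|ᵐ < 1 and |λ₂|ⁿ · |1 + μ*(λ₂ − 1)|ᵐ = 0 < 1. Hence a saddle periodic orbit with these local stability properties is stabilized by Stalled Predictive Feedback Control at μ = μ* for every choice of stalling parameters with m ≥ 1. -/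
/-! The gain `μ* = 1/(1 - λ₂)` is exactly the one that sends the controlled unstable multiplier
`1 + μ(λ₂ - 1)` to `0`, while the stable one becomes the convex-combination weight
`(λ₁ - λ₂)/(1 - λ₂) ∈ (0, 1)`. Since `|λ₁| ≤ 1`, extra uncontrolled steps `Fⁿ` cannot push the
product of the `λ₁`-multipliers up to `1`, and a single controlled step already kills the
`λ₂`-direction. -/

theorem one_add_one_div_sub_mul_sub_one (a b : ℝ) (hb : 1 - b ≠ 0) :
    1 + 1 / (1 - b) * (a - 1) = (a - b) / (1 - b) := by
  field_simp
  ring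

theorem one_div_one_sub_lt_half {b : ℝ} (hb : b < -1) : 1 / (1 - b) < 1 / 2 :=
  one_div_lt_one_div_of_lt two_pos (by linarith)

theorem sub_div_one_sub_mem_Ioo {a b : ℝ} (hba : b < a) (ha : a < 1) :
    (a - b) / (1 - b) ∈ Set.Ioo 0 1 :=
  ⟨div_pos (by linarith) (by linarith), (div_lt_one (by linarith)).2 (by linarith)⟩

theorem abs_pow_mul_abs_pow_lt_one {x y : ℝ} (hx : |x| ≤ 1) (hy : |y| < 1) (n : ℕ) {m : ℕ}
    (hm : m ≠ 0) : |x| ^ n * |y| ^ m < 1 :=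
  calc |x| ^ n * |y| ^ m ≤ 1 * |y| ^ m := by gcongr; exact pow_le_one₀ (abs_nonneg x) hx
    _ = |y| ^ m := one_mul _
    _ < 1 := pow_lt_one₀ (abs_nonneg y) hy hm

/-- At `μ* = 1/(1 - λ₂)` a saddle orbit with `λ₁ ∈ (-1,1)`, `λ₂ < -1` satisfies:
`μ* ∈ (0, 1/2)`, the controlled eigenvalues are `1 + μ*(λ₂-1) = 0` and
`1 + μ*(λ₁-1) = (λ₁-λ₂)/(1-λ₂) ∈ (0,1)`, and for every `m ≥ 1`, `n ≥ 0` the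
Stalled Predictive Feedback Control eigenvalues satisfy
`|λ₁|ⁿ |1+μ*(λ₁-1)|ᵐ < 1` and `|λ₂|ⁿ |1+μ*(λ₂-1)|ᵐ = 0`. -/
theorem stmt14 (lam1 lam2 : ℝ) (h1 : -1 < lam1) (h1' : lam1 < 1) (h2 : lam2 < -1)
    (μ : ℝ) (hμ : μ = 1 / (1 - lam2)) :
    0 < μ ∧ μ < 1 / 2 ∧
    1 + μ * (lam2 - 1) = 0 ∧
    1 + μ * (lam1 - 1) = (lam1 - lam2) / (1 - lam2) ∧
    0 < (lam1 - lam2) / (1 - lam2) ∧ (lam1 - lam2) / (1 - lam2) < 1 ∧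
    ∀ m n : ℕ, 1 ≤ m →
      |lam1| ^ n * |1 + μ * (lam1 - 1)| ^ m < 1 ∧
      |lam2| ^ n * |1 + μ * (lam2 - 1)| ^ m = 0 := by
  subst hμ
  have hd : 1 - lam2 ≠ 0 := by linarith
  have hunstable : 1 + 1 / (1 - lam2) * (lam2 - 1) = 0 := by
    rw [one_add_one_div_sub_mul_sub_one lam2 lam2 hd, sub_self, zero_div]
  have hstable := one_add_one_div_sub_mul_sub_one lam1 lam2 hd
  obtain ⟨hq0, hq1⟩ := sub_div_one_sub_mem_Ioo (a := lam1) (b := lam2) (by linarith) h1'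
  refine ⟨one_div_pos.2 (by linarith), one_div_one_sub_lt_half h2, hunstable, hstable, hq0, hq1,
    fun m n hm => ⟨?_, ?_⟩⟩
  · refine abs_pow_mul_abs_pow_lt_one (abs_le.2 ⟨h1.le, h1'.le⟩) ?_ n (by omega)
    rwa [hstable, abs_of_pos hq0]
  · rw [hunstable, abs_zero, zero_pow (by omega), mul_zero]
end

section
/- Let λ₁, λ₂ be real numbers with −1 < λ₁ < 1, λ₁ ≠ 0, and λ₂ < −1, and set c = (λ₁ − λ₂)/(1 − λ₂) ∈ (0, 1). Then the rescaled asymptotic convergence rate of Stalled Predictive Feedback Control with m = 1 control step and n stalling steps at μ = 1/(1 − λ₂), namely r(n) = (|λ₁|ⁿ · c)^{1/(n+1)} = |λ₁|^{n/(n+1)} · c^{1/(n+1)}, tends to |λ₁| as n → ∞. In particular, for every ε > 0 there exists n such that r(n) < |λ₁| + ε: by stalling, the convergence rate per evaluation of the map can be made arbitrarily close to the contraction rate |λ₁| of the stable direction, independently of the instability λ₂. -/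
open Filter Topology

lemma rpow_pow_mul_one_div_add_one {a b : ℝ} (ha : 0 < a) (hb : 0 ≤ b) (n : ℕ) :
    (a ^ n * b) ^ (1 / ((n : ℝ) + 1)) = a * (b / a) ^ (1 / ((n : ℝ) + 1)) := by
  have hsplit : a ^ n * b = a ^ (n + 1) * (b / a) := by
    field_simp
    ring
  have hexp : 1 / ((n : ℝ) + 1) = ((n + 1 : ℕ) : ℝ)⁻¹ := by
    push_cast
    exact one_div _
  rw [hsplit, Real.mul_rpow (by positivity) (div_nonneg hb ha.le), hexp,
    Real.pow_rpow_inv_natCast ha.le n.succ_ne_zero]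

lemma tendsto_rpow_pow_mul_one_div_add_one {a b : ℝ} (ha : 0 < a) (hb : 0 < b) :
    Tendsto (fun n : ℕ => (a ^ n * b) ^ (1 / ((n : ℝ) + 1))) atTop (𝓝 a) := by
  simp_rw [rpow_pow_mul_one_div_add_one ha hb.le]
  have hroot : Tendsto (fun n : ℕ => (b / a) ^ (1 / ((n : ℝ) + 1))) atTop (𝓝 1) := by
    have hcont := Real.continuousAt_const_rpow (a := b / a) (b := 0) (div_pos hb ha).ne'
    simpa [Function.comp_def] using hcont.tendsto.comp tendsto_one_div_add_atTop_nhds_zero_nat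
  simpa using hroot.const_mul a

theorem stmt15_general (lam1 lam2 : ℝ) (h1 : -1 < lam1) (h1'' : lam1 ≠ 0)
    (h2 : lam2 < -1) (c : ℝ) (hc : c = (lam1 - lam2) / (1 - lam2)) :
    Filter.Tendsto (fun n : ℕ => (|lam1| ^ n * c) ^ (1 / ((n : ℝ) + 1)))
      Filter.atTop (nhds |lam1|) ∧
    ∀ ε : ℝ, 0 < ε → ∃ n : ℕ, (|lam1| ^ n * c) ^ (1 / ((n : ℝ) + 1)) < |lam1| + ε := by
  have hc_pos : 0 < c := by
    rw [hc]
    exact div_pos (by linarith) (by linarith)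
  have hrate := tendsto_rpow_pow_mul_one_div_add_one (abs_pos.mpr h1'') hc_pos
  refine ⟨hrate, fun ε hε => ?_⟩
  exact (hrate.eventually (eventually_lt_nhds (lt_add_of_pos_right _ hε))).exists

/-- Stalling makes the per-evaluation convergence rate approach the contraction rate of
the stable direction: with `c = (λ₁-λ₂)/(1-λ₂)`, the rescaled rate
`r(n) = (|λ₁|ⁿ · c)^(1/(n+1))` of SPFC with `m = 1` control step, `n` stalling steps and
`μ = 1/(1-λ₂)` tends to `|λ₁|` as `n → ∞`; in particular for every `ε > 0` there is `n`
with `r(n) < |λ₁| + ε`. -/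
theorem stmt15 (lam1 lam2 : ℝ) (h1 : -1 < lam1) (h1' : lam1 < 1) (h1'' : lam1 ≠ 0)
    (h2 : lam2 < -1) (c : ℝ) (hc : c = (lam1 - lam2) / (1 - lam2)) :
    Filter.Tendsto (fun n : ℕ => (|lam1| ^ n * c) ^ (1 / ((n : ℝ) + 1)))
      Filter.atTop (nhds |lam1|) ∧
    ∀ ε : ℝ, 0 < ε → ∃ n : ℕ, (|lam1| ^ n * c) ^ (1 / ((n : ℝ) + 1)) < |lam1| + ε :=
  stmt15_general lam1 lam2 h1 h1'' h2 c hc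
end

section
/- Let λ₁, λ₂ be real numbers with −1 < λ₁ < 1 and λ₂ < −1. Then for every μ ∈ ℝ, max(|1 + μ·(λ₁ − 1)|, |1 + μ·(λ₂ − 1)|) > 1 − 2·(1 − λ₁)/(1 − λ₂). In particular, the spectral radius of the Predictive Feedback Control linearization at such a saddle fixed point is bounded below, uniformly in the control parameter μ, by 1 − 2(1 − λ₁)/(1 − λ₂); as λ₂ → −∞ this bound tends to 1, which is the speed limit of Predictive Feedback Control for strongly unstable orbits. -/
/-!
Write `a = 1 - λ₁ > 0` and `b = 1 - λ₂ > 0`, so that `κ₁ = 1 - μa` and `κ₂ = 1 - μb`.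
If `μb ≥ 2` then `κ₂ ≤ -1`, so `|κ₂| ≥ 1`; otherwise `μ < 2/b` and `κ₁ > 1 - 2a/b`.
-/

theorem one_sub_two_mul_div_lt_max_abs_one_sub_mul {a b : ℝ} (ha : 0 < a) (hb : 0 < b)
    (μ : ℝ) : 1 - 2 * a / b < max |1 - μ * a| |1 - μ * b| := by
  rcases le_or_gt 2 (μ * b) with hμ | hμ
  · calc 1 - 2 * a / b < 1 := sub_lt_self _ (by positivity)
      _ ≤ |1 - μ * b| := le_abs.2 (Or.inr (by linarith))
      _ ≤ _ := le_max_right _ _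
  · have hμa : μ * a < 2 * a / b := by
      rw [lt_div_iff₀ hb]
      linarith [mul_lt_mul_of_pos_right hμ ha]
    calc 1 - 2 * a / b < 1 - μ * a := by linarith
      _ ≤ |1 - μ * a| := le_abs_self _
      _ ≤ _ := le_max_left _ _

theorem stmt16_general (lam1 lam2 : ℝ) (h1' : lam1 < 1) (h2 : lam2 < -1)
    (μ : ℝ) :
    1 - 2 * (1 - lam1) / (1 - lam2)
      < max |1 + μ * (lam1 - 1)| |1 + μ * (lam2 - 1)| := by
  have key := one_sub_two_mul_div_lt_max_abs_one_sub_mul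
    (a := 1 - lam1) (b := 1 - lam2) (by linarith) (by linarith) μ
  rwa [show 1 - μ * (1 - lam1) = 1 + μ * (lam1 - 1) by ring,
    show 1 - μ * (1 - lam2) = 1 + μ * (lam2 - 1) by ring] at key

/-- Speed limit of Predictive Feedback Control: for a saddle fixed point with
`λ₁ ∈ (-1,1)` and `λ₂ < -1`, the spectral radius `max(|1+μ(λ₁-1)|, |1+μ(λ₂-1)|)` of the
PFC linearization exceeds `1 - 2(1-λ₁)/(1-λ₂)` for every control parameter `μ`. -/
theorem stmt16 (lam1 lam2 : ℝ) (h1 : -1 < lam1) (h1' : lam1 < 1) (h2 : lam2 < -1)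
    (μ : ℝ) :
    1 - 2 * (1 - lam1) / (1 - lam2)
      < max |1 + μ * (lam1 - 1)| |1 + μ * (lam2 - 1)| :=
  stmt16_general lam1 lam2 h1' h2 μ
end
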